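/- Let p ∈ ℂ[z₁,…,z_d] have multidegree n = (n₁,…,n_d), have no zeros in the open polydisk 𝔻^d, and define the reflection p̃(z) = z₁^{n₁}⋯z_d^{n_d} · conj(p(1/z̄₁,…,1/z̄_d)). Then |p̃(z)| ≤ |p(z)| for all z ∈ 𝔻^d. -/

import Mathlib

/-!
On the torus `|z_i| = s < 1` write `z = s • ω` with `|ω_i| = 1`. Then `q(t) = p(t • ω)` is a
one-variable polynomial without zeros in the unit disk and of degree at most `N = ∑ nᵢ`, and
`|p̃(z)| = s ^ N |q(1/s)|`, `|p(z)| = |q(s)|`. Factoring `q` over its roots `a`, all of modulus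
at least `1`, the bound `|1 - s a| ≤ |s - a|` gives `|p̃| ≤ |p|` on the torus. Since `p̃ / p` is
holomorphic near the closed polydisk of radius `s`, the maximum modulus principle, applied one
coordinate at a time, moves any point of that polydisk to the torus without decreasing `|p̃ / p|`.
-/

open scoped Polynomial

theorem mul_norm_inv_sub_le_norm_sub {s : ℝ} (hs0 : 0 < s) (hs1 : s ≤ 1) {a : ℂ} (ha : 1 ≤ ‖a‖) :
    s * ‖(s : ℂ)⁻¹ - a‖ ≤ ‖(s : ℂ) - a‖ := by
  have hs : (s : ℂ) ≠ 0 := by exact_mod_cast hs0.ne'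
  have hmul : s * ‖(s : ℂ)⁻¹ - a‖ = ‖1 - s * a‖ := by
    rw [← mul_inv_cancel₀ hs, ← mul_sub, norm_mul, Complex.norm_real, Real.norm_of_nonneg hs0.le]
  rw [hmul, ← sq_le_sq₀ (norm_nonneg _) (norm_nonneg _), Complex.sq_norm, Complex.sq_norm,
    Complex.normSq_apply, Complex.normSq_apply]
  have ha2 : 1 ≤ a.re * a.re + a.im * a.im := by
    simpa [Complex.sq_norm, Complex.normSq_apply] using one_le_pow₀ (n := 2) ha
  simp only [Complex.sub_re, Complex.sub_im, Complex.mul_re, Complex.mul_im, Complex.one_re,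
    Complex.one_im, Complex.ofReal_re, Complex.ofReal_im]
  -- `‖s - a‖² - ‖1 - s a‖² = (1 - s²) (‖a‖² - 1)`
  nlinarith [mul_nonneg (by nlinarith : (0 : ℝ) ≤ 1 - s * s) (sub_nonneg.2 ha2)]

namespace Polynomial

theorem norm_eval_eq_mul_prod_roots (q : ℂ[X]) (t : ℂ) :
    ‖q.eval t‖ = ‖q.leadingCoeff‖ * (q.roots.map fun a => ‖t - a‖).prod := by
  conv_lhs => rw [← C_leadingCoeff_mul_prod_multiset_X_sub_C
    (IsAlgClosed.card_roots_eq_natDegree (p := q))]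
  rw [eval_mul, eval_C, eval_multiset_prod, norm_mul, Multiset.map_map]
  congr 1
  simpa [Function.comp_def] using map_multiset_prod (normHom (α := ℂ)) (q.roots.map (t - ·))

theorem pow_mul_norm_eval_inv_le {q : ℂ[X]} (hq : ∀ t : ℂ, ‖t‖ < 1 → q.eval t ≠ 0)
    {s : ℝ} (hs0 : 0 < s) (hs1 : s ≤ 1) {N : ℕ} (hN : q.natDegree ≤ N) :
    s ^ N * ‖q.eval (s : ℂ)⁻¹‖ ≤ ‖q.eval (s : ℂ)‖ := by
  have hroots : ∀ a ∈ q.roots, 1 ≤ ‖a‖ := fun a ha =>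
    not_lt.1 fun h => hq a h (isRoot_of_mem_roots ha)
  have hcard : (q.roots.map fun _ => s).prod = s ^ q.natDegree := by
    rw [Multiset.map_const', Multiset.prod_replicate, IsAlgClosed.card_roots_eq_natDegree]
  rw [norm_eval_eq_mul_prod_roots, norm_eval_eq_mul_prod_roots, mul_left_comm]
  refine mul_le_mul_of_nonneg_left ?_ (norm_nonneg _)
  calc s ^ N * (q.roots.map fun a => ‖(s : ℂ)⁻¹ - a‖).prod
      ≤ s ^ q.natDegree * (q.roots.map fun a => ‖(s : ℂ)⁻¹ - a‖).prod := by
        refine mul_le_mul_of_nonneg_right (pow_le_pow_of_le_one hs0.le hs1 hN) ?_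
        exact Multiset.prod_nonneg fun x hx => by
          obtain ⟨a, -, rfl⟩ := Multiset.mem_map.1 hx; positivity
    _ = (q.roots.map fun a => s * ‖(s : ℂ)⁻¹ - a‖).prod := by
        rw [Multiset.prod_map_mul, hcard]
    _ ≤ (q.roots.map fun a => ‖(s : ℂ) - a‖).prod :=
        Multiset.prod_map_le_prod_map₀ _ _ (fun _ _ => by positivity)
          fun a ha => mul_norm_inv_sub_le_norm_sub hs0 hs1 (hroots a ha)

end Polynomial

open Metric

theorem update_mem_closedBall_zero {ι E : Type*} [Fintype ι] [DecidableEq ι]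
    [SeminormedAddGroup E] {z : ι → E} {s : ℝ} (hz : z ∈ closedBall 0 s) (a : ι) {t : E}
    (ht : ‖t‖ ≤ s) : Function.update z a t ∈ closedBall 0 s := by
  have hs : 0 ≤ s := (norm_nonneg t).trans ht
  rw [mem_closedBall_zero_iff, pi_norm_le_iff_of_nonneg hs] at hz ⊢
  intro i
  rcases eq_or_ne i a with rfl | hi
  · simpa using ht
  · simpa [hi] using hz i

namespace Complex

variable {ι F : Type*} [Fintype ι] [NormedAddCommGroup F] [NormedSpace ℂ F]
  {f : (ι → ℂ) → F} {s : ℝ}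

theorem exists_norm_eq_and_norm_le_update [DecidableEq ι] (hs : 0 < s)
    (hf : DifferentiableOn ℂ f (closedBall 0 s)) {z : ι → ℂ} (hz : z ∈ closedBall 0 s) (a : ι) :
    ∃ t : ℂ, ‖t‖ = s ∧ ‖f z‖ ≤ ‖f (Function.update z a t)‖ := by
  have hslice : DiffContOnCl ℂ (f ∘ Function.update z a) (ball 0 s) := by
    refine DifferentiableOn.diffContOnCl ?_
    rw [closure_ball 0 hs.ne']
    exact hf.comp (fun t _ => (hasFDerivAt_update z t).differentiableAt.differentiableWithinAt)
      fun t ht => update_mem_closedBall_zero hz a (mem_closedBall_zero_iff.1 ht)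
  obtain ⟨t, ht, hmax⟩ := exists_mem_frontier_isMaxOn_norm isBounded_ball (nonempty_ball.2 hs) hslice
  rw [frontier_ball 0 hs.ne', mem_sphere_zero_iff_norm] at ht
  have hza : z a ∈ closure (ball (0 : ℂ) s) := by
    rw [closure_ball 0 hs.ne', mem_closedBall_zero_iff]
    exact (norm_le_pi_norm z a).trans (mem_closedBall_zero_iff.1 hz)
  exact ⟨t, ht, by simpa using hmax hza⟩

theorem exists_forall_norm_eq_and_norm_le (hs : 0 < s)
    (hf : DifferentiableOn ℂ f (closedBall 0 s)) {z : ι → ℂ} (hz : z ∈ closedBall 0 s) :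
    ∃ w : ι → ℂ, (∀ i, ‖w i‖ = s) ∧ ‖f z‖ ≤ ‖f w‖ := by
  classical
  suffices ∀ S : Finset ι, ∀ z ∈ closedBall (0 : ι → ℂ) s, (∀ i ∉ S, ‖z i‖ = s) →
      ∃ w : ι → ℂ, (∀ i, ‖w i‖ = s) ∧ ‖f z‖ ≤ ‖f w‖ from
    this Finset.univ z hz (by simp)
  intro S
  induction S using Finset.induction_on with
  | empty => exact fun z _ hz => ⟨z, fun i => hz i (Finset.notMem_empty i), le_rfl⟩
  | insert a S _ ih =>
    intro z hz hzS
    obtain ⟨t, ht, hle⟩ := exists_norm_eq_and_norm_le_update hs hf hz a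
    obtain ⟨w, hw, hle'⟩ := ih _ (update_mem_closedBall_zero hz a ht.le) fun i hi => by
      rcases eq_or_ne i a with rfl | hia
      · simpa using ht
      · simpa [hia] using hzS i (by simp [hia, hi])
    exact ⟨w, hw, hle.trans hle'⟩

end Complex

theorem pow_sub_eq_pow_mul_inv_pow {G₀ : Type*} [GroupWithZero G₀] {a : G₀} {m n : ℕ}
    (hmn : m ≤ n) (ha : a = 0 → n = 0) : a ^ (n - m) = a ^ n * a⁻¹ ^ m := by
  by_cases h : a = 0
  · obtain rfl : n = 0 := ha h
    obtain rfl : m = 0 := Nat.le_zero.1 hmn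
    simp
  · rw [pow_sub₀ a h hmn, inv_pow]

namespace MvPolynomial

variable {σ : Type*}

noncomputable def multidegree [Finite σ] (p : MvPolynomial σ ℂ) : σ →₀ ℕ :=
  Finsupp.equivFunOnFinite.symm fun i => p.degreeOf i

@[simp]
theorem multidegree_apply [Finite σ] (p : MvPolynomial σ ℂ) (i : σ) :
    p.multidegree i = p.degreeOf i := rfl

/-- The reflection `p̃(z) = z ^ n * conj (p (1 / z̄))` at the multidegree `n`, as a polynomial. -/
noncomputable def reflection [Finite σ] (p : MvPolynomial σ ℂ) : MvPolynomial σ ℂ :=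
  ∑ m ∈ p.support, monomial (p.multidegree - m) (starRingEnd ℂ (p.coeff m))

/-- At `z i = 0` the right-hand side uses `0⁻¹ = 0`, which is harmless only if the variable `i`
does not occur in `p`. -/
theorem eval_reflection [Fintype σ] (p : MvPolynomial σ ℂ) {z : σ → ℂ}
    (hz : ∀ i, z i = 0 → p.degreeOf i = 0) :
    eval z p.reflection =
      (∏ i, z i ^ p.degreeOf i) * starRingEnd ℂ (eval (fun i => (starRingEnd ℂ (z i))⁻¹) p) := by
  rw [reflection, map_sum, eval_eq', map_sum, Finset.mul_sum]
  refine Finset.sum_congr rfl fun m hm => ?_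
  simp only [eval_monomial, Finsupp.prod_fintype _ _ (fun i => pow_zero _), map_mul, map_prod,
    map_pow, map_inv₀, Complex.conj_conj, Finsupp.tsub_apply, multidegree_apply]
  rw [mul_left_comm, ← Finset.prod_mul_distrib]
  congr 1
  exact Finset.prod_congr rfl fun i _ =>
    pow_sub_eq_pow_mul_inv_pow (monomial_le_degreeOf i hm) (hz i)

variable {R : Type*} [CommSemiring R]

theorem eval_aeval_C_mul_X (p : MvPolynomial σ R) (ω : σ → R) (t : R) :
    (aeval (fun i => Polynomial.C (ω i) * Polynomial.X) p).eval t = eval (fun i => ω i * t) p := by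
  rw [← Polynomial.coe_aeval_eq_eval, ← AlgHom.comp_apply, comp_aeval, ← coe_aeval_eq_eval]
  simp

theorem natDegree_aeval_C_mul_X_le [Fintype σ] (p : MvPolynomial σ R) (ω : σ → R) :
    (aeval (fun i => Polynomial.C (ω i) * Polynomial.X) p).natDegree ≤ ∑ i, p.degreeOf i := by
  conv_lhs => rw [p.as_sum]
  rw [map_sum]
  refine Polynomial.natDegree_sum_le_of_forall_le _ _ fun m hm => ?_
  have hterm : aeval (fun i => Polynomial.C (ω i) * Polynomial.X) (monomial m (p.coeff m)) =
      Polynomial.C (p.coeff m * ∏ i, ω i ^ m i) * Polynomial.X ^ ∑ i, m i := by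
    rw [aeval_monomial, Finsupp.prod_fintype _ _ (fun i => pow_zero _)]
    simp only [mul_pow, Finset.prod_mul_distrib, Finset.prod_pow_eq_pow_sum, map_mul, map_prod,
      map_pow, Polynomial.algebraMap_eq, mul_assoc]
  rw [hterm]
  exact (Polynomial.natDegree_C_mul_X_pow_le _ _).trans
    (Finset.sum_le_sum fun i _ => monomial_le_degreeOf i hm)

variable [Fintype σ] {p : MvPolynomial σ ℂ}

theorem norm_eval_reflection_le_of_forall_norm_eq
    (hp : ∀ z : σ → ℂ, (∀ i, ‖z i‖ < 1) → eval z p ≠ 0) {s : ℝ} (hs0 : 0 < s) (hs1 : s < 1)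
    {w : σ → ℂ} (hw : ∀ i, ‖w i‖ = s) : ‖eval w p.reflection‖ ≤ ‖eval w p‖ := by
  have hs : (s : ℂ) ≠ 0 := by exact_mod_cast hs0.ne'
  have hw0 : ∀ i, w i ≠ 0 := fun i h => hs0.ne' (by rw [← hw i, h, norm_zero])
  -- restrict `p` to the complex line through the point `w / s` of the unit torus
  set q := aeval (fun i => Polynomial.C (w i / s) * Polynomial.X) p
  have hq : ∀ t : ℂ, ‖t‖ < 1 → q.eval t ≠ 0 := fun t ht => by
    rw [eval_aeval_C_mul_X]
    refine hp _ fun i => ?_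
    rwa [norm_mul, norm_div, hw i, Complex.norm_real, Real.norm_of_nonneg hs0.le,
      div_self hs0.ne', one_mul]
  have hq_s : q.eval (s : ℂ) = eval w p := by
    rw [eval_aeval_C_mul_X]
    exact congrArg (eval · p) (_root_.funext fun i => div_mul_cancel₀ _ hs)
  have hq_inv : q.eval (s : ℂ)⁻¹ = eval (fun i => (starRingEnd ℂ (w i))⁻¹) p := by
    rw [eval_aeval_C_mul_X]
    refine congrArg (eval · p) (_root_.funext fun i => ?_)
    have hconj : w i * starRingEnd ℂ (w i) = (s : ℂ) ^ 2 := by rw [Complex.mul_conj', hw i]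
    have hconj0 : starRingEnd ℂ (w i) ≠ 0 := (_root_.map_ne_zero _).2 (hw0 i)
    field_simp
    linear_combination hconj
  have hprod : ‖∏ i, w i ^ p.degreeOf i‖ = s ^ ∑ i, p.degreeOf i := by
    simp only [norm_prod, norm_pow, hw, Finset.prod_pow_eq_pow_sum]
  rw [eval_reflection p fun i h => absurd h (hw0 i), norm_mul, RCLike.norm_conj, hprod,
    ← hq_inv, ← hq_s]
  exact Polynomial.pow_mul_norm_eval_inv_le hq hs0 hs1.le (natDegree_aeval_C_mul_X_le p _)

theorem norm_eval_reflection_le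
    (hp : ∀ z : σ → ℂ, (∀ i, ‖z i‖ < 1) → eval z p ≠ 0) {z : σ → ℂ} (hz : ∀ i, ‖z i‖ < 1) :
    ‖eval z p.reflection‖ ≤ ‖eval z p‖ := by
  have hz1 : ‖z‖ < 1 := (pi_norm_lt_iff one_pos).2 hz
  set s := (‖z‖ + 1) / 2 with hs_def
  have hs0 : 0 < s := by positivity
  have hs1 : s < 1 := by linarith
  have hzs : z ∈ closedBall 0 s := mem_closedBall_zero_iff.2 (by linarith)
  have hp_s : ∀ x ∈ closedBall (0 : σ → ℂ) s, eval x p ≠ 0 := fun x hx =>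
    hp x fun i => ((norm_le_pi_norm x i).trans (mem_closedBall_zero_iff.1 hx)).trans_lt hs1
  have heval : ∀ q : MvPolynomial σ ℂ, Differentiable ℂ fun x : σ → ℂ => eval x q :=
    fun q x => (AnalyticOnNhd.eval_mvPolynomial q x trivial).differentiableAt
  have hdiff : DifferentiableOn ℂ (fun x => eval x p.reflection / eval x p) (closedBall 0 s) :=
    fun x hx => by
      simpa only [div_eq_mul_inv] using
        ((heval _ x).fun_mul ((heval p x).fun_inv (hp_s x hx))).differentiableWithinAt
  obtain ⟨w, hw, hle⟩ := Complex.exists_forall_norm_eq_and_norm_le hs0 hdiff hzs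
  have htorus := norm_eval_reflection_le_of_forall_norm_eq hp hs0 hs1 hw
  rw [norm_div, norm_div] at hle
  rw [← div_le_one (norm_pos_iff.2 (hp z hz))]
  exact hle.trans (div_le_one_of_le₀ htorus (norm_nonneg _))

end MvPolynomial

open MvPolynomial

theorem stmt3 (d : ℕ) (p : MvPolynomial (Fin d) ℂ)
    (hp : ∀ z : Fin d → ℂ, (∀ i, ‖z i‖ < 1) → eval z p ≠ 0) :
    ∀ z : Fin d → ℂ, (∀ i, ‖z i‖ < 1) →
      ‖(∏ i, z i ^ p.degreeOf i) *
          (starRingEnd ℂ) (eval (fun i => ((starRingEnd ℂ) (z i))⁻¹) p)‖ ≤ ‖eval z p‖ := by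
  intro z hz
  by_cases h : ∀ i, z i = 0 → p.degreeOf i = 0
  · rw [← eval_reflection p h]
    exact norm_eval_reflection_le hp hz
  · push Not at h
    obtain ⟨i, hzi, hi⟩ := h
    rw [Finset.prod_eq_zero (Finset.mem_univ i) (by rw [hzi, zero_pow hi]), zero_mul, norm_zero]
    exact norm_nonneg _
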